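/- The maximum over all integers k ≥ 2 of (H_k − 7/6)/(k + 1) equals 67/360, and it is attained at k = 5. Equivalently, max over integers k ≥ 2 of (k + H_k − 1/6)/(k + 1) = 1 + 67/360. -/
import Mathlib


/-- The `k`-th harmonic number `H k = ∑_{i=1}^{k} 1/i` (as a real number). -/
noncomputable def H (k : ℕ) : ℝ := ∑ i ∈ Finset.Icc 1 k, (1 : ℝ) / i

lemma H_succ (k : ℕ) : H (k + 1) = H k + 1 / (k + 1 : ℝ) := by
  unfold H
  rw [Finset.sum_Icc_succ_top (by omega : 1 ≤ k + 1)]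
  push_cast; ring

lemma H_two : H 2 = 3 / 2 := by
  have h1 : H 1 = 1 := by unfold H; simp
  have := H_succ 1; rw [h1] at this; rw [this]; norm_num

lemma H_three : H 3 = 11 / 6 := by
  have := H_succ 2; rw [H_two] at this; rw [this]; norm_num

lemma H_four : H 4 = 25 / 12 := by
  have := H_succ 3; rw [H_three] at this; rw [this]; norm_num

lemma H_five : H 5 = 137 / 60 := by
  have := H_succ 4; rw [H_four] at this; rw [this]; norm_num

lemma key (k : ℕ) (hk : 5 ≤ k) : H k ≤ 7 / 6 + 67 / 360 * ((k : ℝ) + 1) := by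
  induction k, hk using Nat.le_induction with
  | base => rw [H_five]; norm_num
  | succ n hn ih =>
    rw [H_succ]
    have h1 : (1 : ℝ) / (n + 1) ≤ 67 / 360 := by
      rw [div_le_iff₀ (by positivity)]
      have : (5 : ℝ) ≤ n := by exact_mod_cast hn
      nlinarith
    push_cast
    linarith

lemma main_ineq (k : ℕ) (hk : 2 ≤ k) : (H k - 7 / 6) / ((k : ℝ) + 1) ≤ 67 / 360 := by
  rw [div_le_iff₀ (by positivity)]
  have : H k ≤ 7 / 6 + 67 / 360 * ((k : ℝ) + 1) := by
    rcases Nat.lt_or_ge k 5 with h5 | h5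
    · interval_cases k
      · rw [H_two]; norm_num
      · rw [H_three]; norm_num
      · rw [H_four]; norm_num
    · exact key k h5
  linarith

/-- The maximum of `(H k − 7/6)/(k + 1)` over integers `k ≥ 2` equals `67/360`,
attained at `k = 5`; equivalently, the maximum of `(k + H k − 1/6)/(k + 1)` over
integers `k ≥ 2` equals `1 + 67/360`. -/
theorem max_ratio_unit_thresholds :
    ((∀ k : ℕ, 2 ≤ k → (H k - 7 / 6) / ((k : ℝ) + 1) ≤ 67 / 360) ∧
      (H 5 - 7 / 6) / ((5 : ℝ) + 1) = 67 / 360) ∧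
    ((∀ k : ℕ, 2 ≤ k → ((k : ℝ) + H k - 1 / 6) / ((k : ℝ) + 1) ≤ 1 + 67 / 360) ∧
      ((5 : ℝ) + H 5 - 1 / 6) / ((5 : ℝ) + 1) = 1 + 67 / 360) := by
  refine ⟨⟨main_ineq, by rw [H_five]; norm_num⟩, ⟨fun k hk => ?_, by rw [H_five]; norm_num⟩⟩
  have h := main_ineq k hk
  have hpos : (0 : ℝ) < (k : ℝ) + 1 := by positivity
  rw [div_le_iff₀ hpos] at h ⊢
  linarith
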